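/- arXiv:1201.3500 — 3 statements merged into one kernel-verified Lean document; each statement's English description precedes it below -/
import Mathlib

section
/- For every a ∈ ℝ and all t, s ∈ T, the function a f_t + f_s is the unique fixed point of Φ_{a t + s}; that is, f_{a t + s} = a f_t + f_s. Consequently the map Θ : T → B(I, ℝ²) defined by Θ(t) = f_t is linear. -/
/-!
Linearity is immediate, since `F_n (x, y, z)` is linear jointly in `(y, z)` and the
coefficients of `t`. For uniqueness, the difference `h` of two bounded fixed points of `Φ_t` is a
bounded fixed point of `Φ_0`, and `Φ_0` shrinks `|h₁| + |h₂|` by the factor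
`max |α_n| (|β_n| + |γ_n|) < 1`. Since the maps `L_n` cover `I`, the supremum `S` of
`|h₁| + |h₂|` over `I` satisfies `S ≤ c S` with `c < 1`, hence `S = 0`.
-/

open Set

/-- The affine contractive homeomorphism `L n` mapping `I = [x 0, x N]` onto the
`n`-th subinterval. -/
noncomputable def LMap {N : ℕ} (x : Fin (N + 1) → ℝ) (n : Fin N) (u : ℝ) : ℝ :=
  ((x n.succ - x n.castSucc) / (x (Fin.last N) - x 0)) * u +
    (x (Fin.last N) * x n.castSucc - x 0 * x n.succ) / (x (Fin.last N) - x 0)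

/-- `f` is a fixed point of the operator `Φ_t`:  for every `n` and `u ∈ I`,
`f (L_n u) = F_n (u, f u)` where `F_n (u, y, z) = (α_n y + β_n z + p_n u, γ_n z + q_n u)`,
the linear polynomials being `p_n u = (t n).1.1 * u + (t n).1.2` and
`q_n u = (t n).2.1 * u + (t n).2.2`. -/
def FixEq {N : ℕ} (x : Fin (N + 1) → ℝ) (α β γ : Fin N → ℝ)
    (t : Fin N → (ℝ × ℝ) × (ℝ × ℝ)) (f : ℝ → ℝ × ℝ) : Prop :=
  ∀ n : Fin N, ∀ u ∈ Icc (x 0) (x (Fin.last N)),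
    f (LMap x n u) =
      (α n * (f u).1 + β n * (f u).2 + ((t n).1.1 * u + (t n).1.2),
       γ n * (f u).2 + ((t n).2.1 * u + (t n).2.2))

/-- `f` belongs to `B(I, ℝ²)`, the set of bounded functions on `I = [x 0, x N]`. -/
def BddOnI {N : ℕ} (x : Fin (N + 1) → ℝ) (f : ℝ → ℝ × ℝ) : Prop :=
  ∃ M : ℝ, ∀ u ∈ Icc (x 0) (x (Fin.last N)), ‖f u‖ ≤ M

theorem Fin.exists_mem_Icc_castSucc_succ {β : Type*} [LinearOrder β] {N : ℕ} (hN : 1 ≤ N)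
    {x : Fin (N + 1) → β} (hx : Monotone x) {v : β} (hv : v ∈ Icc (x 0) (x (Fin.last N))) :
    ∃ n : Fin N, v ∈ Icc (x n.castSucc) (x n.succ) := by
  obtain ⟨k, hvk, hmin⟩ := wellFounded_lt.has_min {i | v ≤ x i} ⟨_, hv.2⟩
  induction k using Fin.cases with
  | zero => exact ⟨⟨0, hN⟩, hv.1, hvk.trans (hx (Fin.zero_le _))⟩
  | succ n =>
    refine ⟨n, le_of_not_ge fun hvn => hmin _ hvn ?_, hvk⟩
    exact Fin.castSucc_lt_succ

theorem LMap_image_Icc {N : ℕ} {x : Fin (N + 1) → ℝ} (hx : StrictMono x) (n : Fin N) :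
    LMap x n '' Icc (x 0) (x (Fin.last N)) = Icc (x n.castSucc) (x n.succ) := by
  have hI : 0 < x (Fin.last N) - x 0 := sub_pos.2 (hx (Fin.castSucc_lt_last n).bot_lt)
  have hIn : 0 < x n.succ - x n.castSucc := sub_pos.2 (hx Fin.castSucc_lt_succ)
  rw [show LMap x n = fun u => _ * u + _ from rfl, image_affine_Icc' (div_pos hIn hI)]
  congr 1 <;> field_simp <;> ring

theorem exists_LMap_eq {N : ℕ} (hN : 1 ≤ N) {x : Fin (N + 1) → ℝ} (hx : StrictMono x)
    {v : ℝ} (hv : v ∈ Icc (x 0) (x (Fin.last N))) :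
    ∃ n : Fin N, ∃ u ∈ Icc (x 0) (x (Fin.last N)), LMap x n u = v := by
  obtain ⟨n, hn⟩ := Fin.exists_mem_Icc_castSucc_succ hN hx.monotone hv
  rw [← LMap_image_Icc hx n] at hn
  exact ⟨n, hn⟩

section FixedPoints

variable {N : ℕ} {x : Fin (N + 1) → ℝ} {α β γ : Fin N → ℝ}

theorem BddOnI.smul_add_smul {f g : ℝ → ℝ × ℝ} (hf : BddOnI x f) (hg : BddOnI x g) (a b : ℝ) :
    BddOnI x (a • f + b • g) := by
  obtain ⟨Mf, hMf⟩ := hf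
  obtain ⟨Mg, hMg⟩ := hg
  refine ⟨|a| * Mf + |b| * Mg, fun u hu => ?_⟩
  calc ‖a • f u + b • g u‖ ≤ |a| * ‖f u‖ + |b| * ‖g u‖ := by
        simpa only [norm_smul, Real.norm_eq_abs] using norm_add_le (a • f u) (b • g u)
    _ ≤ |a| * Mf + |b| * Mg := by gcongr; exacts [hMf u hu, hMg u hu]

theorem FixEq.smul_add_smul {t s : Fin N → (ℝ × ℝ) × (ℝ × ℝ)} {f g : ℝ → ℝ × ℝ}
    (hf : FixEq x α β γ t f) (hg : FixEq x α β γ s g) (a b : ℝ) :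
    FixEq x α β γ (a • t + b • s) (a • f + b • g) := by
  intro n u hu
  simp only [Pi.add_apply, Pi.smul_apply, hf n u hu, hg n u hu, Prod.smul_mk, smul_eq_mul,
    Prod.mk_add_mk, Prod.fst_add, Prod.snd_add, Prod.smul_fst, Prod.smul_snd, Prod.mk.injEq]
  constructor <;> ring

theorem abs_add_abs_le_max_mul (a b c y z : ℝ) :
    |a * y + b * z| + |c * z| ≤ max |a| (|b| + |c|) * (|y| + |z|) := by
  have hy : |a| * |y| ≤ max |a| (|b| + |c|) * |y| := by gcongr; exact le_max_left _ _
  have hz : (|b| + |c|) * |z| ≤ max |a| (|b| + |c|) * |z| := by gcongr; exact le_max_right _ _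
  calc |a * y + b * z| + |c * z| ≤ |a| * |y| + (|b| + |c|) * |z| := by
        have := abs_add_le (a * y) (b * z)
        simp only [abs_mul] at this ⊢
        linarith
    _ ≤ _ := by linarith

theorem exists_contraction_const (hN : 1 ≤ N) (hα : ∀ n, |α n| < 1)
    (hβγ : ∀ n, |β n| + |γ n| < 1) :
    ∃ c, 0 ≤ c ∧ c < 1 ∧ ∀ n, max |α n| (|β n| + |γ n|) ≤ c := by
  have : Nonempty (Fin N) := ⟨⟨0, hN⟩⟩
  obtain ⟨n₀, hn₀⟩ := Finite.exists_max fun n => max |α n| (|β n| + |γ n|)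
  exact ⟨_, (abs_nonneg _).trans (le_max_left _ _), max_lt (hα n₀) (hβγ n₀), hn₀⟩

theorem eqOn_zero_of_fixEq_zero (hN : 1 ≤ N) (hx : StrictMono x) (hα : ∀ n, |α n| < 1)
    (hβγ : ∀ n, |β n| + |γ n| < 1) {h : ℝ → ℝ × ℝ} (hb : BddOnI x h)
    (hh : FixEq x α β γ 0 h) : EqOn h 0 (Icc (x 0) (x (Fin.last N))) := by
  set I := Icc (x 0) (x (Fin.last N))
  set E : ℝ → ℝ := fun u => |(h u).1| + |(h u).2|
  obtain ⟨c, hc0, hc1, hc⟩ := exists_contraction_const hN hα hβγ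
  have hstep : ∀ n, ∀ u ∈ I, E (LMap x n u) ≤ c * E u := fun n u hu => by
    calc E (LMap x n u) ≤ max |α n| (|β n| + |γ n|) * E u := by
          simpa [E, hh n u hu] using abs_add_abs_le_max_mul (α n) (β n) (γ n) (h u).1 (h u).2
      _ ≤ c * E u := by gcongr; exact hc n
  have hbdd : BddAbove (E '' I) := by
    obtain ⟨M, hM⟩ := hb
    refine ⟨M + M, forall_mem_image.2 fun u hu => add_le_add ?_ ?_⟩
    · exact (norm_fst_le (h u)).trans (hM u hu)
    · exact (norm_snd_le (h u)).trans (hM u hu)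
  have hne : (E '' I).Nonempty := (nonempty_Icc.2 (hx.monotone (Fin.zero_le _))).image E
  have hle : ∀ v ∈ I, E v ≤ sSup (E '' I) := fun v hv => le_csSup hbdd (mem_image_of_mem E hv)
  have hS : sSup (E '' I) ≤ c * sSup (E '' I) := by
    refine csSup_le hne (forall_mem_image.2 fun v hv => ?_)
    obtain ⟨n, u, hu, rfl⟩ := exists_LMap_eq hN hx hv
    exact (hstep n u hu).trans (mul_le_mul_of_nonneg_left (hle u hu) hc0)
  intro v hv
  have h₁ := abs_nonneg (h v).1
  have h₂ := abs_nonneg (h v).2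
  have hEv : E v ≤ 0 := by nlinarith [hle v hv]
  exact Prod.ext (abs_eq_zero.1 (by linarith)) (abs_eq_zero.1 (by linarith))

theorem FixEq.eqOn (hN : 1 ≤ N) (hx : StrictMono x) (hα : ∀ n, |α n| < 1)
    (hβγ : ∀ n, |β n| + |γ n| < 1) {t : Fin N → (ℝ × ℝ) × (ℝ × ℝ)} {f g : ℝ → ℝ × ℝ}
    (hfb : BddOnI x f) (hf : FixEq x α β γ t f) (hgb : BddOnI x g) (hg : FixEq x α β γ t g) :
    EqOn f g (Icc (x 0) (x (Fin.last N))) := by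
  have hb := hfb.smul_add_smul hgb 1 (-1)
  have hfix := hf.smul_add_smul hg 1 (-1)
  simp only [one_smul, neg_one_smul, ← sub_eq_add_neg, sub_self] at hb hfix
  exact fun v hv => sub_eq_zero.1 (eqOn_zero_of_fixEq_zero hN hx hα hβγ hb hfix hv)

end FixedPoints

theorem stmt1_general {N : ℕ} (hN : 1 ≤ N) (x : Fin (N + 1) → ℝ) (hx : StrictMono x)
    (α β γ : Fin N → ℝ) (hα : ∀ n, |α n| < 1)
    (hβγ : ∀ n, |β n| + |γ n| < 1)
    (a : ℝ) (t s : Fin N → (ℝ × ℝ) × (ℝ × ℝ)) (ft fs : ℝ → ℝ × ℝ)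
    (hftb : BddOnI x ft) (hft : FixEq x α β γ t ft)
    (hfsb : BddOnI x fs) (hfs : FixEq x α β γ s fs) :
    BddOnI x (a • ft + fs) ∧
    FixEq x α β γ (a • t + s) (a • ft + fs) ∧
    (∀ g : ℝ → ℝ × ℝ, BddOnI x g → FixEq x α β γ (a • t + s) g →
      EqOn g (a • ft + fs) (Icc (x 0) (x (Fin.last N)))) := by
  have hb : BddOnI x (a • ft + fs) := by simpa using hftb.smul_add_smul hfsb a 1
  have hfix : FixEq x α β γ (a • t + s) (a • ft + fs) := by
    simpa using hft.smul_add_smul hfs a 1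
  exact ⟨hb, hfix, fun g hgb hg => hg.eqOn hN hx hα hβγ hgb hb hfix⟩

/-- For every `a ∈ ℝ` and `t, s ∈ T`, the function `a • f_t + f_s` is the unique
fixed point of `Φ_{a • t + s}` (in `B(I, ℝ²)`), i.e. `f_{a • t + s} = a • f_t + f_s`;
consequently `Θ : t ↦ f_t` is linear. -/
theorem stmt1 {N : ℕ} (hN : 1 ≤ N) (x : Fin (N + 1) → ℝ) (hx : StrictMono x)
    (α β γ : Fin N → ℝ) (hα : ∀ n, |α n| < 1) (hγ : ∀ n, |γ n| < 1)
    (hβγ : ∀ n, |β n| + |γ n| < 1)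
    (a : ℝ) (t s : Fin N → (ℝ × ℝ) × (ℝ × ℝ)) (ft fs : ℝ → ℝ × ℝ)
    (hftb : BddOnI x ft) (hft : FixEq x α β γ t ft)
    (hfsb : BddOnI x fs) (hfs : FixEq x α β γ s fs) :
    BddOnI x (a • ft + fs) ∧
    FixEq x α β γ (a • t + s) (a • ft + fs) ∧
    (∀ g : ℝ → ℝ × ℝ, BddOnI x g → FixEq x α β γ (a • t + s) g →
      EqOn g (a • ft + fs) (Icc (x 0) (x (Fin.last N)))) :=
  stmt1_general hN x hx α β γ hα hβγ a t s ft fs hftb hft hfsb hfs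
end

section
/- Assume β_n ≠ 0 for every n = 1,…,N. If (0, f_2) ∈ S_0, i.e., some member of S_0 has identically zero first component, then f_2 is a linear polynomial on I. Consequently, the kernel of the projection P : S_0 → S_0^1, P(f_1, f_2) = f_1, has dimension 2. -/
/-!
The first component of the fixed-point equation on a single piece reads
`0 = β_n f₂(u) + p_n(u)`, so `β_n ≠ 0` forces `f₂ = -p_n / β_n`, an affine function. Conversely
every `(0, c u + d)` satisfies the fixed-point equations for suitable linear `p_n, q_n`, so the
kernel of `P` is exactly the affine functions, with basis `u ↦ u` and `u ↦ 1`.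
-/

open Set

/-- The space `S₀` of pairs `f = (f₁, f₂)` where `f₁` is a CHFIF and `f₂` an AFIF
for some interpolation data over the fixed partition and parameters; members are
extended by `0` outside `I = [x 0, x N]`. -/
def S0set {N : ℕ} (x : Fin (N + 1) → ℝ) (α β γ : Fin N → ℝ) : Set (ℝ → ℝ × ℝ) :=
  {f | ContinuousOn f (Icc (x 0) (x (Fin.last N))) ∧
       (∀ u ∉ Icc (x 0) (x (Fin.last N)), f u = 0) ∧
       ∃ t : Fin N → (ℝ × ℝ) × (ℝ × ℝ), FixEq x α β γ t f}

section

variable {N : ℕ} {x : Fin (N + 1) → ℝ}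

lemma LMap_eq (hI : x 0 ≠ x (Fin.last N)) (n : Fin N) (u : ℝ) :
    LMap x n u = x n.castSucc +
      (x n.succ - x n.castSucc) * ((u - x 0) / (x (Fin.last N) - x 0)) := by
  have : x (Fin.last N) - x 0 ≠ 0 := sub_ne_zero.2 hI.symm
  unfold LMap
  field_simp
  ring

lemma LMap_mem_Icc (hx : StrictMono x) (n : Fin N) {u : ℝ}
    (hu : u ∈ Icc (x 0) (x (Fin.last N))) :
    LMap x n u ∈ Icc (x n.castSucc) (x n.succ) := by
  have hn : x n.castSucc < x n.succ := hx Fin.castSucc_lt_succ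
  have hI : x 0 < x (Fin.last N) :=
    (hx.monotone (Fin.zero_le _)).trans_lt (hn.trans_le (hx.monotone (Fin.le_last _)))
  have hθ₀ : 0 ≤ (u - x 0) / (x (Fin.last N) - x 0) :=
    div_nonneg (sub_nonneg.2 hu.1) (sub_pos.2 hI).le
  have hθ₁ : (u - x 0) / (x (Fin.last N) - x 0) ≤ 1 :=
    div_le_one_of_le₀ (sub_le_sub_right hu.2 _) (sub_pos.2 hI).le
  have hlen : 0 ≤ x n.succ - x n.castSucc := sub_nonneg.2 hn.le
  rw [LMap_eq hI.ne]
  constructor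
  · nlinarith [mul_nonneg hlen hθ₀]
  · nlinarith [mul_le_of_le_one_right hlen hθ₁]

lemma LMap_mem_Icc_of_mem_Icc (hx : StrictMono x) (n : Fin N) {u : ℝ}
    (hu : u ∈ Icc (x 0) (x (Fin.last N))) :
    LMap x n u ∈ Icc (x 0) (x (Fin.last N)) :=
  Icc_subset_Icc (hx.monotone (Fin.zero_le _)) (hx.monotone (Fin.le_last _))
    (LMap_mem_Icc hx n hu)

lemma FixEq.exists_snd_eq_affine_of_fst_eq_zero {α β γ : Fin N → ℝ}
    {t : Fin N → (ℝ × ℝ) × (ℝ × ℝ)} {f : ℝ → ℝ × ℝ} (hfix : FixEq x α β γ t f)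
    (hf₁ : ∀ u, (f u).1 = 0) (n : Fin N) (hβ : β n ≠ 0) :
    ∃ c d : ℝ, ∀ u ∈ Icc (x 0) (x (Fin.last N)), (f u).2 = c * u + d := by
  refine ⟨-(t n).1.1 / β n, -(t n).1.2 / β n, fun u hu => ?_⟩
  have h := congrArg Prod.fst (hfix n u hu)
  simp only [hf₁] at h
  field_simp
  linear_combination -h

variable (x) in
noncomputable def zeroAffinePair (c d : ℝ) : ℝ → ℝ × ℝ :=
  (Icc (x 0) (x (Fin.last N))).indicator fun u => (0, c * u + d)

lemma zeroAffinePair_fst (c d u : ℝ) : (zeroAffinePair x c d u).1 = 0 := by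
  rw [zeroAffinePair, indicator_apply]
  split_ifs <;> rfl

lemma zeroAffinePair_mem_S0set (hx : StrictMono x) (α β γ : Fin N → ℝ) (c d : ℝ) :
    zeroAffinePair x c d ∈ S0set x α β γ := by
  refine ⟨continuousOn_const.prodMk (by fun_prop) |>.congr fun u hu => indicator_of_mem hu _,
    fun u hu => indicator_of_notMem hu _, ?_⟩
  -- `p_n u = -β_n (c u + d)` and `q_n u = c L_n u + d - γ_n (c u + d)`, both linear in `u`
  refine ⟨fun n => ((-β n * c, -β n * d),
    (c * ((x n.succ - x n.castSucc) / (x (Fin.last N) - x 0)) - γ n * c,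
     c * ((x (Fin.last N) * x n.castSucc - x 0 * x n.succ) / (x (Fin.last N) - x 0))
       + d - γ n * d)), fun n u hu => ?_⟩
  rw [zeroAffinePair, indicator_of_mem (LMap_mem_Icc_of_mem_Icc hx n hu), indicator_of_mem hu]
  simp only [LMap, Prod.mk.injEq]
  constructor <;> ring

lemma smul_zeroAffinePair_add_smul (c d : ℝ) :
    c • zeroAffinePair x 1 0 + d • zeroAffinePair x 0 1 = zeroAffinePair x c d := by
  ext u <;> by_cases hu : u ∈ Icc (x 0) (x (Fin.last N)) <;>
    simp [zeroAffinePair, hu]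

lemma eq_zeroAffinePair {f : ℝ → ℝ × ℝ} {c d : ℝ}
    (hout : ∀ u ∉ Icc (x 0) (x (Fin.last N)), f u = 0) (hf₁ : ∀ u, (f u).1 = 0)
    (hf₂ : ∀ u ∈ Icc (x 0) (x (Fin.last N)), (f u).2 = c * u + d) :
    f = zeroAffinePair x c d := by
  funext u
  by_cases hu : u ∈ Icc (x 0) (x (Fin.last N))
  · rw [zeroAffinePair, indicator_of_mem hu]
    exact Prod.ext (hf₁ u) (hf₂ u hu)
  · rw [zeroAffinePair, indicator_of_notMem hu, hout u hu]

lemma linearIndependent_zeroAffinePair (hI : x 0 < x (Fin.last N)) :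
    LinearIndependent ℝ ![zeroAffinePair x 1 0, zeroAffinePair x 0 1] := by
  rw [LinearIndependent.pair_iff]
  intro c d h
  rw [smul_zeroAffinePair_add_smul] at h
  have hval : ∀ u ∈ Icc (x 0) (x (Fin.last N)), c * u + d = 0 := fun u hu => by
    simpa [zeroAffinePair, hu] using congrArg Prod.snd (congrFun h u)
  have h₀ := hval _ (left_mem_Icc.2 hI.le)
  have h₁ := hval _ (right_mem_Icc.2 hI.le)
  have hc : c = 0 := by
    have : c * (x (Fin.last N) - x 0) = 0 := by linear_combination h₁ - h₀
    exact (mul_eq_zero.1 this).resolve_right (sub_ne_zero.2 hI.ne')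
  exact ⟨hc, by linear_combination h₀ - x 0 * hc⟩

end

theorem stmt5_general {N : ℕ} (hN : 1 ≤ N) (x : Fin (N + 1) → ℝ) (hx : StrictMono x)
    (α β γ : Fin N → ℝ) (hβ : ∀ n, β n ≠ 0) :
    (∀ f ∈ S0set x α β γ, (∀ u : ℝ, (f u).1 = 0) →
      ∃ c d : ℝ, ∀ u ∈ Icc (x 0) (x (Fin.last N)), (f u).2 = c * u + d) ∧
    (∃ b : Fin 2 → (ℝ → ℝ × ℝ),
      (∀ j, b j ∈ S0set x α β γ ∧ ∀ u : ℝ, (b j u).1 = 0) ∧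
      LinearIndependent ℝ b ∧
      ∀ f ∈ S0set x α β γ, (∀ u : ℝ, (f u).1 = 0) →
        f ∈ Submodule.span ℝ (Set.range b)) := by
  have hI : x 0 < x (Fin.last N) := hx (Fin.val_pos_iff.1 hN)
  have hker : ∀ f ∈ S0set x α β γ, (∀ u : ℝ, (f u).1 = 0) →
      ∃ c d : ℝ, ∀ u ∈ Icc (x 0) (x (Fin.last N)), (f u).2 = c * u + d :=
    fun f ⟨_, _, _, hfix⟩ hf₁ =>
      hfix.exists_snd_eq_affine_of_fst_eq_zero hf₁ ⟨0, hN⟩ (hβ _)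
  refine ⟨hker, ![zeroAffinePair x 1 0, zeroAffinePair x 0 1], fun j => ?_,
    linearIndependent_zeroAffinePair hI, fun f hf hf₁ => ?_⟩
  · fin_cases j <;> exact ⟨zeroAffinePair_mem_S0set hx α β γ _ _, zeroAffinePair_fst _ _⟩
  · obtain ⟨c, d, hf₂⟩ := hker f hf hf₁
    rw [eq_zeroAffinePair hf.2.1 hf₁ hf₂, ← smul_zeroAffinePair_add_smul c d]
    exact Submodule.add_mem _ (Submodule.smul_mem _ _ (Submodule.subset_span ⟨0, rfl⟩))
      (Submodule.smul_mem _ _ (Submodule.subset_span ⟨1, rfl⟩))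

/-- If `β_n ≠ 0` for every `n` and `(0, f₂) ∈ S₀` (zero first component), then `f₂`
is a linear polynomial on `I`; consequently the kernel of the projection
`P : S₀ → S₀¹`, `P (f₁, f₂) = f₁`, has dimension `2`. -/
theorem stmt5 {N : ℕ} (hN : 1 ≤ N) (x : Fin (N + 1) → ℝ) (hx : StrictMono x)
    (α β γ : Fin N → ℝ) (hα : ∀ n, |α n| < 1) (hγ : ∀ n, |γ n| < 1)
    (hβγ : ∀ n, |β n| + |γ n| < 1) (hβ : ∀ n, β n ≠ 0) :
    (∀ f ∈ S0set x α β γ, (∀ u : ℝ, (f u).1 = 0) →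
      ∃ c d : ℝ, ∀ u ∈ Icc (x 0) (x (Fin.last N)), (f u).2 = c * u + d) ∧
    (∃ b : Fin 2 → (ℝ → ℝ × ℝ),
      (∀ j, b j ∈ S0set x α β γ ∧ ∀ u : ℝ, (b j u).1 = 0) ∧
      LinearIndependent ℝ b ∧
      ∀ f ∈ S0set x α β γ, (∀ u : ℝ, (f u).1 = 0) →
        f ∈ Submodule.span ℝ (Set.range b)) :=
  stmt5_general hN x hx α β γ hβ
end

section
/- Let f = (f_1, f_2) and f̂ = (f̂_1, f̂_2) be the continuous fixed points associated with two CHFIF systems over the same partition x_0 < … < x_N, with parameters α_n, β_n and polynomials p_n for f, and α̂_n, β̂_n and p̂_n for f̂. Then the L²(I) inner products satisfy ⟨f_1, f̂_1⟩ = [ Σ_{n=1}^{N} a_n ( α_n β̂_n ⟨f_1, f̂_2⟩ + β_n α̂_n ⟨f_2, f̂_1⟩ + β_n β̂_n ⟨f_2, f̂_2⟩ + α_n ⟨f_1, p̂_n⟩ + α̂_n ⟨f̂_1, p_n⟩ + β_n ⟨f_2, p̂_n⟩ + β̂_n ⟨f̂_2, p_n⟩ + ⟨p_n, p̂_n⟩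 ) ] / ( 1 − Σ_{n=1}^{N} a_n α_n α̂_n ), where a_n = (x_n − x_{n−1})/(x_N − x_0) and ⟨g, h⟩ = ∫_I g(x) h(x) dx. -/
/-!
On the `n`-th subinterval the substitution `u = L_n t` gives
`∫_{I_n} f₁ f̂₁ = a_n ∫_I (f₁ ∘ L_n) (f̂₁ ∘ L_n)`, and the recurrences write `f₁ ∘ L_n` and
`f̂₁ ∘ L_n` as affine combinations of `f₁, f₂, p_n` and `f̂₁, f̂₂, p̂_n`. Expanding the product
and summing over `n` shows that `⟨f₁, f̂₁⟩` solves the linear equation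
`X = (∑ a_n α_n α̂_n) X + R`, where `R` is the numerator of the claim. Since the `a_n` are
positive weights summing to `1` and `|α_n α̂_n| < 1`, the coefficient is `< 1`, so the equation
can be solved for `X`.
-/

open Set

open intervalIntegral MeasureTheory

theorem Fin.sum_adjacent_eq_of_additive {α M : Type*} [AddCommMonoid M] {N : ℕ}
    (x : Fin (N + 1) → α) (F : α → α → M) (h0 : F (x 0) (x 0) = 0)
    (hF : ∀ n : Fin N,
      F (x 0) (x n.castSucc) + F (x n.castSucc) (x n.succ) = F (x 0) (x n.succ)) :
    ∑ n : Fin N, F (x n.castSucc) (x n.succ) = F (x 0) (x (Fin.last N)) := by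
  induction N with
  | zero => simpa using h0.symm
  | succ N ih =>
    have hx' := ih (x ∘ Fin.castSucc) h0 fun n => by
      simpa only [Function.comp_apply, Fin.succ_castSucc, Fin.castSucc_zero] using hF n.castSucc
    simp only [Function.comp_apply, ← Fin.succ_castSucc, Fin.castSucc_zero] at hx'
    rw [Fin.sum_univ_castSucc, hx', ← Fin.succ_last, hF (Fin.last N)]

theorem Fin.sum_succ_sub_castSucc {G : Type*} [AddCommGroup G] {N : ℕ} (x : Fin (N + 1) → G) :
    ∑ n : Fin N, (x n.succ - x n.castSucc) = x (Fin.last N) - x 0 :=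
  Fin.sum_adjacent_eq_of_additive x (fun a b => b - a) (sub_self _) fun _ =>
    sub_add_sub_cancel' _ _ _

theorem intervalIntegral.integral_eq_sum_partition {E : Type*} [NormedAddCommGroup E]
    [NormedSpace ℝ E] {N : ℕ} {x : Fin (N + 1) → ℝ} (hx : Monotone x) {g : ℝ → E}
    (hg : IntervalIntegrable g volume (x 0) (x (Fin.last N))) :
    ∫ u in x 0..x (Fin.last N), g u = ∑ n : Fin N, ∫ u in x n.castSucc..x n.succ, g u := by
  have mem : ∀ i, x i ∈ uIcc (x 0) (x (Fin.last N)) := fun i =>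
    mem_uIcc_of_le (hx (Fin.zero_le i)) (hx (Fin.le_last i))
  have hint : ∀ i j, IntervalIntegrable g volume (x i) (x j) := fun i j =>
    hg.mono_set (uIcc_subset_uIcc (mem i) (mem j))
  exact (Fin.sum_adjacent_eq_of_additive x (fun a b => ∫ u in a..b, g u) integral_same
    fun n => integral_add_adjacent_intervals (hint _ _) (hint _ _)).symm

lemma mul_lt_one_of_abs_lt_one {a b : ℝ} (ha : |a| < 1) (hb : |b| < 1) : a * b < 1 :=
  (abs_lt.1 (abs_mul a b ▸ mul_lt_one_of_nonneg_of_lt_one_left (abs_nonneg a) ha hb.le)).2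

lemma Finset.sum_mul_lt_one {ι : Type*} {s : Finset ι} (hs : s.Nonempty) {w c : ι → ℝ}
    (hw : ∀ i ∈ s, 0 < w i) (hw1 : ∑ i ∈ s, w i = 1) (hc : ∀ i ∈ s, c i < 1) :
    ∑ i ∈ s, w i * c i < 1 :=
  calc ∑ i ∈ s, w i * c i < ∑ i ∈ s, w i :=
        Finset.sum_lt_sum_of_nonempty hs fun i hi => mul_lt_of_lt_one_right (hw i hi) (hc i hi)
    _ = 1 := hw1

lemma eq_div_of_eq_sum_mul_add {ι : Type*} (s : Finset ι) {I : ℝ} (w c R : ι → ℝ)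
    (h : I = ∑ i ∈ s, w i * (c i * I + R i)) (hne : ∑ i ∈ s, w i * c i ≠ 1) :
    I = (∑ i ∈ s, w i * R i) / (1 - ∑ i ∈ s, w i * c i) := by
  rw [eq_div_iff (sub_ne_zero.2 hne.symm)]
  simp only [mul_add, Finset.sum_add_distrib, ← mul_assoc, ← Finset.sum_mul] at h
  linear_combination h

section LMap

variable {N : ℕ} (x : Fin (N + 1) → ℝ)

lemma LMap_left (h : x 0 ≠ x (Fin.last N)) (n : Fin N) : LMap x n (x 0) = x n.castSucc := by
  have : x (Fin.last N) - x 0 ≠ 0 := sub_ne_zero.2 h.symm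
  unfold LMap
  field_simp
  ring

lemma LMap_right (h : x 0 ≠ x (Fin.last N)) (n : Fin N) :
    LMap x n (x (Fin.last N)) = x n.succ := by
  have : x (Fin.last N) - x 0 ≠ 0 := sub_ne_zero.2 h.symm
  unfold LMap
  field_simp
  ring

lemma integral_comp_LMap (h : x 0 ≠ x (Fin.last N)) {n : Fin N} (hn : x n.castSucc ≠ x n.succ)
    (g : ℝ → ℝ) :
    ∫ u in x n.castSucc..x n.succ, g u =
      (x n.succ - x n.castSucc) / (x (Fin.last N) - x 0) *
        ∫ u in x 0..x (Fin.last N), g (LMap x n u) := by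
  have hc : (x n.succ - x n.castSucc) / (x (Fin.last N) - x 0) ≠ 0 :=
    div_ne_zero (sub_ne_zero.2 hn.symm) (sub_ne_zero.2 h.symm)
  unfold LMap
  rw [integral_comp_mul_add g hc, smul_eq_mul, mul_inv_cancel_left₀ hc]
  exact congrArg₂ (fun a b => ∫ u in a..b, g u) (LMap_left x h n).symm (LMap_right x h n).symm

end LMap

section Bilinear

variable {a b : ℝ}

lemma integral_linear_comb_mul (c₁ c₂ : ℝ) {g₁ g₂ g₃ h : ℝ → ℝ}
    (hg₁ : ContinuousOn g₁ (uIcc a b)) (hg₂ : ContinuousOn g₂ (uIcc a b))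
    (hg₃ : ContinuousOn g₃ (uIcc a b)) (hh : ContinuousOn h (uIcc a b)) :
    ∫ u in a..b, (c₁ * g₁ u + c₂ * g₂ u + g₃ u) * h u =
      c₁ * (∫ u in a..b, g₁ u * h u) + c₂ * (∫ u in a..b, g₂ u * h u) +
        ∫ u in a..b, g₃ u * h u := by
  simp_rw [add_mul, mul_assoc]
  rw [intervalIntegral.integral_add, intervalIntegral.integral_add,
    intervalIntegral.integral_const_mul, intervalIntegral.integral_const_mul]
  all_goals apply ContinuousOn.intervalIntegrable; fun_prop

lemma integral_mul_linear_comb (c₁ c₂ : ℝ) {g h₁ h₂ h₃ : ℝ → ℝ}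
    (hg : ContinuousOn g (uIcc a b)) (hh₁ : ContinuousOn h₁ (uIcc a b))
    (hh₂ : ContinuousOn h₂ (uIcc a b)) (hh₃ : ContinuousOn h₃ (uIcc a b)) :
    ∫ u in a..b, g u * (c₁ * h₁ u + c₂ * h₂ u + h₃ u) =
      c₁ * (∫ u in a..b, g u * h₁ u) + c₂ * (∫ u in a..b, g u * h₂ u) +
        ∫ u in a..b, g u * h₃ u := by
  simp only [mul_comm (g _)]
  exact integral_linear_comb_mul c₁ c₂ hh₁ hh₂ hh₃ hg

lemma integral_linear_comb_mul_linear_comb {α β αh βh : ℝ} {f₁ f₂ p fh₁ fh₂ ph : ℝ → ℝ}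
    (hf₁ : ContinuousOn f₁ (uIcc a b)) (hf₂ : ContinuousOn f₂ (uIcc a b))
    (hp : ContinuousOn p (uIcc a b)) (hfh₁ : ContinuousOn fh₁ (uIcc a b))
    (hfh₂ : ContinuousOn fh₂ (uIcc a b)) (hph : ContinuousOn ph (uIcc a b)) :
    ∫ u in a..b, (α * f₁ u + β * f₂ u + p u) * (αh * fh₁ u + βh * fh₂ u + ph u) =
      α * αh * (∫ u in a..b, f₁ u * fh₁ u) +
        (α * βh * (∫ u in a..b, f₁ u * fh₂ u) +
         β * αh * (∫ u in a..b, f₂ u * fh₁ u) +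
         β * βh * (∫ u in a..b, f₂ u * fh₂ u) +
         α * (∫ u in a..b, f₁ u * ph u) +
         αh * (∫ u in a..b, fh₁ u * p u) +
         β * (∫ u in a..b, f₂ u * ph u) +
         βh * (∫ u in a..b, fh₂ u * p u) +
         (∫ u in a..b, p u * ph u)) := by
  have hH : ContinuousOn (fun u => αh * fh₁ u + βh * fh₂ u + ph u) (uIcc a b) := by fun_prop
  rw [integral_linear_comb_mul α β hf₁ hf₂ hp hH, integral_mul_linear_comb αh βh hf₁ hfh₁ hfh₂ hph,
    integral_mul_linear_comb αh βh hf₂ hfh₁ hfh₂ hph,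
    integral_mul_linear_comb αh βh hp hfh₁ hfh₂ hph]
  simp only [mul_comm (p _)]
  ring

end Bilinear

theorem stmt9_general {N : ℕ} (hN : 1 ≤ N) (x : Fin (N + 1) → ℝ) (hx : StrictMono x)
    (α β αh βh : Fin N → ℝ)
    (hα : ∀ n, |α n| < 1)
    (hαh : ∀ n, |αh n| < 1)
    (pc pd phc phd : Fin N → ℝ)
    (f₁ f₂ fh₁ fh₂ : ℝ → ℝ)
    (hcf₁ : ContinuousOn f₁ (Icc (x 0) (x (Fin.last N))))
    (hcf₂ : ContinuousOn f₂ (Icc (x 0) (x (Fin.last N))))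
    (hcfh₁ : ContinuousOn fh₁ (Icc (x 0) (x (Fin.last N))))
    (hcfh₂ : ContinuousOn fh₂ (Icc (x 0) (x (Fin.last N))))
    (hrec₁ : ∀ n : Fin N, ∀ u ∈ Icc (x 0) (x (Fin.last N)),
      f₁ (LMap x n u) = α n * f₁ u + β n * f₂ u + (pc n * u + pd n))
    (hrech₁ : ∀ n : Fin N, ∀ u ∈ Icc (x 0) (x (Fin.last N)),
      fh₁ (LMap x n u) = αh n * fh₁ u + βh n * fh₂ u + (phc n * u + phd n)) :
    (∫ u in (x 0)..(x (Fin.last N)), f₁ u * fh₁ u) =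
      (∑ n : Fin N, ((x n.succ - x n.castSucc) / (x (Fin.last N) - x 0)) *
        (α n * βh n * (∫ u in (x 0)..(x (Fin.last N)), f₁ u * fh₂ u) +
         β n * αh n * (∫ u in (x 0)..(x (Fin.last N)), f₂ u * fh₁ u) +
         β n * βh n * (∫ u in (x 0)..(x (Fin.last N)), f₂ u * fh₂ u) +
         α n * (∫ u in (x 0)..(x (Fin.last N)), f₁ u * (phc n * u + phd n)) +
         αh n * (∫ u in (x 0)..(x (Fin.last N)), fh₁ u * (pc n * u + pd n)) +
         β n * (∫ u in (x 0)..(x (Fin.last N)), f₂ u * (phc n * u + phd n)) +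
         βh n * (∫ u in (x 0)..(x (Fin.last N)), fh₂ u * (pc n * u + pd n)) +
         (∫ u in (x 0)..(x (Fin.last N)), (pc n * u + pd n) * (phc n * u + phd n)))) /
      (1 - ∑ n : Fin N, ((x n.succ - x n.castSucc) / (x (Fin.last N) - x 0)) *
        (α n * αh n)) := by
  have : NeZero N := ⟨by omega⟩
  have hAB : x 0 < x (Fin.last N) := hx Fin.last_pos'
  rw [← uIcc_of_le hAB.le] at hcf₁ hcf₂ hcfh₁ hcfh₂ hrec₁ hrech₁
  have hweights : ∑ n : Fin N, (x n.succ - x n.castSucc) / (x (Fin.last N) - x 0) = 1 := by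
    rw [← Finset.sum_div, Fin.sum_succ_sub_castSucc, div_self (sub_pos.2 hAB).ne']
  refine eq_div_of_eq_sum_mul_add _ _ _ _ ?_ (Finset.sum_mul_lt_one Finset.univ_nonempty
    (fun n _ => div_pos (sub_pos.2 (hx n.castSucc_lt_succ)) (sub_pos.2 hAB)) hweights
    fun n _ => mul_lt_one_of_abs_lt_one (hα n) (hαh n)).ne
  conv_lhs => rw [integral_eq_sum_partition (g := fun u => f₁ u * fh₁ u) hx.monotone
    (hcf₁.mul hcfh₁).intervalIntegrable]
  refine Finset.sum_congr rfl fun n _ => ?_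
  rw [integral_comp_LMap x hAB.ne (hx n.castSucc_lt_succ).ne]
  congr 1
  refine (integral_congr fun u hu => ?_).trans (integral_linear_comb_mul_linear_comb
    (p := fun u => pc n * u + pd n) (ph := fun u => phc n * u + phd n) hcf₁ hcf₂ (by fun_prop)
    hcfh₁ hcfh₂ (by fun_prop))
  simp only [hrec₁ n u hu, hrech₁ n u hu]

/-- The inner-product identity for two CHFIF systems over the same partition:
`⟨f₁, f̂₁⟩` equals the indicated rational expression in the parameters, the mixed
inner products and the inner products against the linear polynomials
`p_n u = pc n * u + pd n` and `p̂_n u = phc n * u + phd n`.  Here `f = (f₁, f₂)` and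
`f̂ = (f̂₁, f̂₂)` are the continuous fixed points of the two systems, satisfying the
recurrences `f₁ ∘ L_n = α_n f₁ + β_n f₂ + p_n`, `f₂ ∘ L_n = γ_n f₂ + q_n` and the
hatted analogues, and `⟨g, h⟩ = ∫_{x 0}^{x N} g u * h u du`. -/
theorem stmt9 {N : ℕ} (hN : 1 ≤ N) (x : Fin (N + 1) → ℝ) (hx : StrictMono x)
    (α β γ αh βh γh : Fin N → ℝ)
    (hα : ∀ n, |α n| < 1) (hγ : ∀ n, |γ n| < 1) (hβγ : ∀ n, |β n| + |γ n| < 1)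
    (hαh : ∀ n, |αh n| < 1) (hγh : ∀ n, |γh n| < 1)
    (hβγh : ∀ n, |βh n| + |γh n| < 1)
    (pc pd qc qd phc phd qhc qhd : Fin N → ℝ)
    (f₁ f₂ fh₁ fh₂ : ℝ → ℝ)
    (hcf₁ : ContinuousOn f₁ (Icc (x 0) (x (Fin.last N))))
    (hcf₂ : ContinuousOn f₂ (Icc (x 0) (x (Fin.last N))))
    (hcfh₁ : ContinuousOn fh₁ (Icc (x 0) (x (Fin.last N))))
    (hcfh₂ : ContinuousOn fh₂ (Icc (x 0) (x (Fin.last N))))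
    (hrec₁ : ∀ n : Fin N, ∀ u ∈ Icc (x 0) (x (Fin.last N)),
      f₁ (LMap x n u) = α n * f₁ u + β n * f₂ u + (pc n * u + pd n))
    (hrec₂ : ∀ n : Fin N, ∀ u ∈ Icc (x 0) (x (Fin.last N)),
      f₂ (LMap x n u) = γ n * f₂ u + (qc n * u + qd n))
    (hrech₁ : ∀ n : Fin N, ∀ u ∈ Icc (x 0) (x (Fin.last N)),
      fh₁ (LMap x n u) = αh n * fh₁ u + βh n * fh₂ u + (phc n * u + phd n))
    (hrech₂ : ∀ n : Fin N, ∀ u ∈ Icc (x 0) (x (Fin.last N)),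
      fh₂ (LMap x n u) = γh n * fh₂ u + (qhc n * u + qhd n)) :
    (∫ u in (x 0)..(x (Fin.last N)), f₁ u * fh₁ u) =
      (∑ n : Fin N, ((x n.succ - x n.castSucc) / (x (Fin.last N) - x 0)) *
        (α n * βh n * (∫ u in (x 0)..(x (Fin.last N)), f₁ u * fh₂ u) +
         β n * αh n * (∫ u in (x 0)..(x (Fin.last N)), f₂ u * fh₁ u) +
         β n * βh n * (∫ u in (x 0)..(x (Fin.last N)), f₂ u * fh₂ u) +
         α n * (∫ u in (x 0)..(x (Fin.last N)), f₁ u * (phc n * u + phd n)) +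
         αh n * (∫ u in (x 0)..(x (Fin.last N)), fh₁ u * (pc n * u + pd n)) +
         β n * (∫ u in (x 0)..(x (Fin.last N)), f₂ u * (phc n * u + phd n)) +
         βh n * (∫ u in (x 0)..(x (Fin.last N)), fh₂ u * (pc n * u + pd n)) +
         (∫ u in (x 0)..(x (Fin.last N)), (pc n * u + pd n) * (phc n * u + phd n)))) /
      (1 - ∑ n : Fin N, ((x n.succ - x n.castSucc) / (x (Fin.last N) - x 0)) *
        (α n * αh n)) :=
  stmt9_general hN x hx α β αh βh hα hαh pc pd phc phd f₁ f₂ fh₁ fh₂ hcf₁ hcf₂ hcfh₁ hcfh₂ hrec₁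
    hrech₁
end
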